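/- Let b > 0, κ > 0 and l < 0 < h be real numbers. Let u* ∈ U_ad, a ∈ L²(μ), and let λ ∈ L²(μ) satisfy the sign conditions for u*; assume the pointwise variational inequality: for μ-a.e. x, (a(x) + κ·λ(x) + b·u*(x))·(c − u*(x)) ≥ 0 for every c ∈ [l, h]. Let v ∈ L²(μ) satisfy the feasible-direction sign conditions: v ≥ 0 μ-a.e. on {u* = l} and v ≤ 0 μ-a.e. on {u* = h}. Then ∫ (a + b·u*)·v dμ + κ·g'(u*; v) ≥ 0, and equality holds if and only if for μ-a.e. x: v(x) = 0 whenever |a(x) + b·u*(x)| ≠ κ; v(x) ≥ 0 whenever u*(x) = 0 and a(x) = −κ; and v(x) ≤ 0 whenever u*(x) = 0 and a(x) = κ. (Abstract form of the pointwise characterization (3.25)–(3.26) of the critical cone C_{u*}, where a plays the role of −𝕙·p*.) -/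

import Mathlib

/-!
Pointwise, the integrand splits as `(p + κλ) v + κ (|·|'(u*; v) - λ v)` with `p = a + b u*`.
The first term is nonnegative by the variational inequality and feasibility of `v`, the second
because `λ` is a subgradient of `|·|` at `u*`; so the integral is nonnegative, and it vanishes iff
both terms vanish a.e. Where `u* = 0` this says `a v + κ |v| = 0`. Where `u* ≠ 0`
the second term vanishes identically, and the variational inequality forces
`|p| = κ + |p + κλ|`, so `(p + κλ) v = 0` says exactly that `v = 0` unless `|p| = κ`.
-/

open MeasureTheory Set

def IsAbsSubgradient (u lam : ℝ) : Prop :=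
  (0 < u → lam = 1) ∧ (u < 0 → lam = -1) ∧ (u = 0 → lam ∈ Icc (-1 : ℝ) 1)

noncomputable def absDirDeriv (u v : ℝ) : ℝ :=
  if 0 < u then v else if u < 0 then -v else |v|

@[simp]
lemma absDirDeriv_zero_left (v : ℝ) : absDirDeriv 0 v = |v| := by
  simp [absDirDeriv]

namespace IsAbsSubgradient

variable {u lam : ℝ}

lemma absDirDeriv_eq_mul (hs : IsAbsSubgradient u lam) (hu : u ≠ 0) (v : ℝ) :
    absDirDeriv u v = lam * v := by
  rcases hu.lt_or_gt with hneg | hpos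
  · simp [absDirDeriv, hs.2.1 hneg, hneg, hneg.not_gt]
  · simp [absDirDeriv, hs.1 hpos, hpos]

lemma mul_le_absDirDeriv (hs : IsAbsSubgradient u lam) (v : ℝ) :
    lam * v ≤ absDirDeriv u v := by
  rcases eq_or_ne u 0 with rfl | hu
  · have hlam : |lam| ≤ 1 := abs_le.2 (hs.2.2 rfl)
    calc lam * v ≤ |lam| * |v| := (le_abs_self _).trans (abs_mul _ _).le
      _ ≤ |v| := mul_le_of_le_one_left (abs_nonneg v) hlam
      _ = absDirDeriv 0 v := (absDirDeriv_zero_left v).symm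
  · exact (hs.absDirDeriv_eq_mul hu v).ge

end IsAbsSubgradient

section VariationalInequality

variable {l h u m v : ℝ}

lemma nonneg_of_forall_mem_Icc (hvi : ∀ c ∈ Icc l h, 0 ≤ m * (c - u)) (hu : u ∈ Ico l h) :
    0 ≤ m :=
  nonneg_of_mul_nonneg_left (hvi h ⟨hu.1.trans hu.2.le, le_rfl⟩) (sub_pos.2 hu.2)

lemma nonpos_of_forall_mem_Icc (hvi : ∀ c ∈ Icc l h, 0 ≤ m * (c - u)) (hu : u ∈ Ioc l h) :
    m ≤ 0 :=
  nonpos_of_mul_nonneg_left (hvi l ⟨le_rfl, hu.1.le.trans hu.2⟩) (sub_neg.2 hu.1)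

lemma mul_nonneg_of_forall_mem_Icc (hvi : ∀ c ∈ Icc l h, 0 ≤ m * (c - u)) (hu : u ∈ Icc l h)
    (hvl : u = l → 0 ≤ v) (hvh : u = h → v ≤ 0) : 0 ≤ m * v := by
  rcases lt_trichotomy v 0 with hv | rfl | hv
  · have hlu : l < u := hu.1.lt_of_ne fun e => (hvl e.symm).not_gt hv
    exact mul_nonneg_of_nonpos_of_nonpos (nonpos_of_forall_mem_Icc hvi ⟨hlu, hu.2⟩) hv.le
  · simp
  · have huh : u < h := hu.2.lt_of_ne fun e => (hvh e).not_gt hv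
    exact mul_nonneg (nonneg_of_forall_mem_Icc hvi ⟨hu.1, huh⟩) hv.le

end VariationalInequality

lemma mul_add_mul_abs_eq_zero_iff {a κ v : ℝ} (hκ : 0 < κ) :
    a * v + κ * |v| = 0 ↔ (|a| ≠ κ → v = 0) ∧ (a = -κ → 0 ≤ v) ∧ (a = κ → v ≤ 0) := by
  rcases lt_trichotomy v 0 with hv | rfl | hv
  · have hsum : a * v + κ * |v| = (a - κ) * v := by rw [abs_of_neg hv]; ring
    rw [hsum, mul_eq_zero, sub_eq_zero, or_iff_left hv.ne]
    constructor
    · rintro rfl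
      exact ⟨fun h => absurd (abs_of_pos hκ) h, fun h => by linarith, fun _ => hv.le⟩
    · rintro ⟨hne, hneg, -⟩
      rcases (abs_eq hκ.le).1 (not_imp_comm.1 hne hv.ne) with h | h
      · exact h
      · exact absurd (hneg h) hv.not_ge
  · simp
  · have hsum : a * v + κ * |v| = (a + κ) * v := by rw [abs_of_pos hv]; ring
    rw [hsum, mul_eq_zero, add_eq_zero_iff_eq_neg, or_iff_left hv.ne']
    constructor
    · rintro rfl
      exact ⟨fun h => absurd (by rw [abs_neg, abs_of_pos hκ]) h, fun _ => hv.le,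
        fun h => by linarith⟩
    · rintro ⟨hne, -, hpos⟩
      rcases (abs_eq hκ.le).1 (not_imp_comm.1 hne hv.ne') with h | h
      · exact absurd (hpos h) hv.not_ge
      · exact h

section Integrand

variable {b κ l h u a lam v : ℝ}

lemma abs_eq_add_abs_of_ne_zero (hκ : 0 ≤ κ) (hl : l < 0) (hh : 0 < h) (hu : u ∈ Icc l h)
    (hs : IsAbsSubgradient u lam) (hvi : ∀ c ∈ Icc l h, 0 ≤ (a + κ * lam) * (c - u))
    (hu0 : u ≠ 0) : |a| = κ + |a + κ * lam| := by
  rcases hu0.lt_or_gt with hneg | hpos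
  · have hm : 0 ≤ a + κ * lam := nonneg_of_forall_mem_Icc hvi ⟨hu.1, hneg.trans hh⟩
    rw [hs.2.1 hneg] at hm ⊢
    rw [abs_of_nonneg hm, abs_of_nonneg (by linarith)]
    ring
  · have hm : a + κ * lam ≤ 0 := nonpos_of_forall_mem_Icc hvi ⟨hl.trans hpos, hu.2⟩
    rw [hs.1 hpos] at hm ⊢
    rw [abs_of_nonpos hm, abs_of_nonpos (by linarith)]
    ring

lemma critical_integrand_nonneg (hκ : 0 ≤ κ) (hu : u ∈ Icc l h) (hs : IsAbsSubgradient u lam)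
    (hvi : ∀ c ∈ Icc l h, 0 ≤ (a + κ * lam + b * u) * (c - u))
    (hvl : u = l → 0 ≤ v) (hvh : u = h → v ≤ 0) :
    0 ≤ (a + b * u) * v + κ * absDirDeriv u v := by
  have hsplit : (a + b * u) * v + κ * absDirDeriv u v
      = (a + κ * lam + b * u) * v + κ * (absDirDeriv u v - lam * v) := by ring
  rw [hsplit]
  exact add_nonneg (mul_nonneg_of_forall_mem_Icc hvi hu hvl hvh)
    (mul_nonneg hκ (sub_nonneg.2 (hs.mul_le_absDirDeriv v)))

lemma critical_integrand_eq_zero_iff (hκ : 0 < κ) (hl : l < 0) (hh : 0 < h)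
    (hu : u ∈ Icc l h) (hs : IsAbsSubgradient u lam)
    (hvi : ∀ c ∈ Icc l h, 0 ≤ (a + κ * lam + b * u) * (c - u)) :
    (a + b * u) * v + κ * absDirDeriv u v = 0 ↔
      (|a + b * u| ≠ κ → v = 0) ∧ (u = 0 ∧ a = -κ → 0 ≤ v) ∧ (u = 0 ∧ a = κ → v ≤ 0) := by
  rcases eq_or_ne u 0 with rfl | hu0
  · simpa using mul_add_mul_abs_eq_zero_iff hκ
  · have hvi' : ∀ c ∈ Icc l h, 0 ≤ (a + b * u + κ * lam) * (c - u) := by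
      simpa only [add_right_comm] using hvi
    rw [hs.absDirDeriv_eq_mul hu0, ← mul_assoc, ← add_mul,
      abs_eq_add_abs_of_ne_zero hκ.le hl hh hu hs hvi' hu0]
    simp [hu0, or_iff_not_imp_left]

end Integrand

lemma absDirDeriv_eq_indicator {X : Type*} (u v : X → ℝ) (x : X) :
    absDirDeriv (u x) (v x) = {x | 0 < u x}.indicator v x - {x | u x < 0}.indicator v x
      + {x | u x = 0}.indicator (fun x => |v x|) x := by
  rcases lt_trichotomy (u x) 0 with hneg | hzero | hpos
  · simp [absDirDeriv, indicator, hneg, hneg.not_gt, hneg.ne]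
  · simp [absDirDeriv, indicator, hzero]
  · simp [absDirDeriv, indicator, hpos, hpos.not_gt, hpos.ne']

section Integral

variable {X : Type*} [MeasurableSpace X] {μ : Measure X} {u v : X → ℝ}

lemma integrable_absDirDeriv (hu : Measurable u) (hv : Integrable v μ) :
    Integrable (fun x => absDirDeriv (u x) (v x)) μ := by
  simp only [absDirDeriv_eq_indicator u v]
  exact ((hv.indicator (measurableSet_lt measurable_const hu)).sub
    (hv.indicator (measurableSet_lt hu measurable_const))).add
    (hv.abs.indicator (measurableSet_eq_fun hu measurable_const))

lemma integral_absDirDeriv (hu : Measurable u) (hv : Integrable v μ) :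
    ∫ x, absDirDeriv (u x) (v x) ∂μ = (∫ x in {x | 0 < u x}, v x ∂μ)
      - (∫ x in {x | u x < 0}, v x ∂μ) + ∫ x in {x | u x = 0}, |v x| ∂μ := by
  have hpos : MeasurableSet {x | 0 < u x} := measurableSet_lt measurable_const hu
  have hneg : MeasurableSet {x | u x < 0} := measurableSet_lt hu measurable_const
  have hzero : MeasurableSet {x | u x = 0} := measurableSet_eq_fun hu measurable_const
  simp only [absDirDeriv_eq_indicator u v]
  rw [integral_add (f := fun x => {x | 0 < u x}.indicator v x - {x | u x < 0}.indicator v x)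
    ((hv.indicator hpos).sub (hv.indicator hneg)) (hv.abs.indicator hzero),
    integral_sub (hv.indicator hpos) (hv.indicator hneg), integral_indicator hpos,
    integral_indicator hneg, integral_indicator hzero]

end Integral

theorem critical_cone_characterization_general
    {X : Type*} [MeasurableSpace X] (μ : Measure X) [IsFiniteMeasure μ]
    (b κ l h : ℝ) (hκ : 0 < κ) (hl : l < 0) (hh : 0 < h)
    (ustar a lam v : Lp ℝ 2 μ)
    (hustar : ∀ᵐ x ∂μ, ustar x ∈ Set.Icc l h)
    (hsign : ∀ᵐ x ∂μ, (0 < ustar x → lam x = 1) ∧ (ustar x < 0 → lam x = -1) ∧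
      (ustar x = 0 → lam x ∈ Set.Icc (-1 : ℝ) 1))
    (hvi : ∀ᵐ x ∂μ, ∀ c ∈ Set.Icc l h,
      0 ≤ (a x + κ * lam x + b * ustar x) * (c - ustar x))
    (hv : ∀ᵐ x ∂μ, (ustar x = l → 0 ≤ v x) ∧ (ustar x = h → v x ≤ 0)) :
    0 ≤ (∫ x, (a x + b * ustar x) * v x ∂μ)
        + κ * ((∫ x in {x | 0 < ustar x}, v x ∂μ) - (∫ x in {x | ustar x < 0}, v x ∂μ)
          + ∫ x in {x | ustar x = 0}, |v x| ∂μ) ∧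
    ((∫ x, (a x + b * ustar x) * v x ∂μ)
        + κ * ((∫ x in {x | 0 < ustar x}, v x ∂μ) - (∫ x in {x | ustar x < 0}, v x ∂μ)
          + ∫ x in {x | ustar x = 0}, |v x| ∂μ) = 0 ↔
      (∀ᵐ x ∂μ, (|a x + b * ustar x| ≠ κ → v x = 0) ∧
        (ustar x = 0 ∧ a x = -κ → 0 ≤ v x) ∧
        (ustar x = 0 ∧ a x = κ → v x ≤ 0))) := by
  have hu : Measurable ustar := (Lp.stronglyMeasurable ustar).measurable
  have hv1 : Integrable v μ := (Lp.memLp v).integrable one_le_two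
  have hpv : Integrable (fun x => (a x + b * ustar x) * v x) μ :=
    ((Lp.memLp a).add ((Lp.memLp ustar).const_mul b)).integrable_mul (Lp.memLp v)
  have hpg : Integrable (fun x => κ * absDirDeriv (ustar x) (v x)) μ :=
    (integrable_absDirDeriv hu hv1).const_mul κ
  rw [← integral_absDirDeriv hu hv1, ← integral_const_mul, ← integral_add hpv hpg]
  have hnonneg : ∀ᵐ x ∂μ, 0 ≤ (a x + b * ustar x) * v x + κ * absDirDeriv (ustar x) (v x) := by
    filter_upwards [hustar, hsign, hvi, hv] with x hux hsx hvix hvx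
    exact critical_integrand_nonneg hκ.le hux hsx hvix hvx.1 hvx.2
  rw [integral_eq_zero_iff_of_nonneg_ae hnonneg (hpv.add hpg)]
  refine ⟨integral_nonneg_of_ae hnonneg, Filter.eventually_congr ?_⟩
  filter_upwards [hustar, hsign, hvi] with x hux hsx hvix
  exact critical_integrand_eq_zero_iff hκ hl hh hux hsx hvix

/-- Abstract pointwise characterization ((3.25)–(3.26)) of the critical cone: under the
pointwise variational inequality with multiplier `λ` satisfying the sign conditions for
`u*`, and for feasible directions `v`, one has
`∫ (a + b u*) v dμ + κ g'(u*; v) ≥ 0`, with equality if and only if a.e.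
`v = 0` where `|a + b u*| ≠ κ`, `v ≥ 0` where `u* = 0 ∧ a = -κ`, and
`v ≤ 0` where `u* = 0 ∧ a = κ`. -/
theorem critical_cone_characterization
    {X : Type*} [MeasurableSpace X] (μ : Measure X) [IsFiniteMeasure μ]
    (b κ l h : ℝ) (hb : 0 < b) (hκ : 0 < κ) (hl : l < 0) (hh : 0 < h)
    (ustar a lam v : Lp ℝ 2 μ)
    (hustar : ∀ᵐ x ∂μ, ustar x ∈ Set.Icc l h)
    (hsign : ∀ᵐ x ∂μ, (0 < ustar x → lam x = 1) ∧ (ustar x < 0 → lam x = -1) ∧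
      (ustar x = 0 → lam x ∈ Set.Icc (-1 : ℝ) 1))
    (hvi : ∀ᵐ x ∂μ, ∀ c ∈ Set.Icc l h,
      0 ≤ (a x + κ * lam x + b * ustar x) * (c - ustar x))
    (hv : ∀ᵐ x ∂μ, (ustar x = l → 0 ≤ v x) ∧ (ustar x = h → v x ≤ 0)) :
    0 ≤ (∫ x, (a x + b * ustar x) * v x ∂μ)
        + κ * ((∫ x in {x | 0 < ustar x}, v x ∂μ) - (∫ x in {x | ustar x < 0}, v x ∂μ)
          + ∫ x in {x | ustar x = 0}, |v x| ∂μ) ∧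
    ((∫ x, (a x + b * ustar x) * v x ∂μ)
        + κ * ((∫ x in {x | 0 < ustar x}, v x ∂μ) - (∫ x in {x | ustar x < 0}, v x ∂μ)
          + ∫ x in {x | ustar x = 0}, |v x| ∂μ) = 0 ↔
      (∀ᵐ x ∂μ, (|a x + b * ustar x| ≠ κ → v x = 0) ∧
        (ustar x = 0 ∧ a x = -κ → 0 ≤ v x) ∧
        (ustar x = 0 ∧ a x = κ → v x ≤ 0))) :=
  critical_cone_characterization_general μ b κ l h hκ hl hh ustar a lam v hustar hsign hvi hv
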